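/- Let G be a finitely generated group of subexponential growth with finite symmetric generating set S, acting expansively and continuously on a nondegenerate continuum X, and let α > 1 and the compatible metric D on X be such that for every positive integer n and any distinct x, y ∈ X with D(x,y) ≥ α^{-n} one has max_{|g|≤n} D(gx,gy) ≥ 1/(4α). Let A be any nondegenerate subcontinuum of X. Then for every sufficiently large n there exist a family K_n of pairwise disjoint subcontinua of A with |K_n| > √(αⁿ/3), each of D-diameter at least α^{-n}, and an element g_n ∈ G with |g_n| ≤ n such that at least α^{n/6}/√3 members K of K_n satisfy diam_D(g_n(K)) ≥ 1/(4α). -/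

import Mathlib

open Pointwise Filter Metric Set Topology TopologicalSpace

/-- The group of self-homeomorphisms of `X`, with `(f * g) x = f (g x)`. -/
instance homeoGroup {X : Type*} [TopologicalSpace X] : Group (X ≃ₜ X) where
  mul f g := g.trans f
  one := Homeomorph.refl X
  inv := Homeomorph.symm
  mul_assoc _ _ _ := rfl
  one_mul _ := Homeomorph.ext fun _ => rfl
  mul_one _ := Homeomorph.ext fun _ => rfl
  inv_mul_cancel f := Homeomorph.ext f.symm_apply_apply

/-- The word length of `g` with respect to the (symmetric) generating set `S`:
the least `n` such that `g` is a product of `n` elements of `S`. -/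
noncomputable def wordLength {G : Type*} [Group G] (S : Set G) (g : G) : ℕ :=
  sInf {n : ℕ | g ∈ S ^ n}

/-- The growth function `β(G,S;k) = #{g ∈ G : |g| ≤ k}`. -/
noncomputable def growthFn {G : Type*} [Group G] (S : Set G) (k : ℕ) : ℕ :=
  Set.ncard {g : G | wordLength S g ≤ k}

/-- `G` has subexponential growth w.r.t. `S`: `lim_k β(G,S;k)^{1/k} ≤ 1`. -/
def SubexpGrowth {G : Type*} [Group G] (S : Set G) : Prop :=
  Filter.limsup (fun k : ℕ => (growthFn S k : ℝ) ^ (1 / (k : ℝ))) Filter.atTop ≤ 1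

/-- A continuum (here: a compact connected metric space, via instances) is Suslinian if
every family of pairwise disjoint nondegenerate subcontinua is countable. -/
def Suslinian (X : Type*) [MetricSpace X] : Prop :=
  ∀ 𝒜 : Set (Set X), (∀ A ∈ 𝒜, IsCompact A ∧ IsConnected A ∧ A.Nontrivial) →
    𝒜.Pairwise Disjoint → 𝒜.Countable

/-- The diameter of a set `K` with respect to a distance function `D`. -/
noncomputable def diamD {X : Type*} (D : X → X → ℝ) (K : Set X) : ℝ :=
  sSup (Set.image2 D K K)

section GroupAux
variable {G : Type*} [Group G] {S : Set G}

lemma list_prod_mem_pow : ∀ (l : List G), (∀ x ∈ l, x ∈ S) → l.prod ∈ S ^ l.length := by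
  intro l
  induction l with
  | nil => intro _; simp [Set.mem_one]
  | cons a t ih =>
    intro h
    rw [List.prod_cons, List.length_cons, pow_succ']
    exact Set.mul_mem_mul (h a (by simp)) (ih fun x hx => h x (List.mem_cons_of_mem _ hx))

lemma mem_pow_wordLength (hSsym : S⁻¹ = S) (hSgen : Subgroup.closure S = ⊤) (g : G) :
    g ∈ S ^ (wordLength S g) := by
  have hg : g ∈ Submonoid.closure S := by
    have h1 : g ∈ (Subgroup.closure S).toSubmonoid := by rw [hSgen]; trivial
    rwa [Subgroup.closure_toSubmonoid, hSsym, Set.union_self] at h1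
  obtain ⟨l, hl, hlp⟩ := Submonoid.exists_list_of_mem_closure hg
  have h2 : g ∈ S ^ l.length := hlp ▸ list_prod_mem_pow l hl
  exact Nat.sInf_mem (⟨l.length, h2⟩ : {n : ℕ | g ∈ S ^ n}.Nonempty)

lemma ball_subset_pow (hSsym : S⁻¹ = S) (hSgen : Subgroup.closure S = ⊤) (n : ℕ) :
    {g : G | wordLength S g ≤ n} ⊆ (S ∪ {1}) ^ n := fun g hg =>
  Set.pow_subset_pow Set.subset_union_left (by simp) hg (mem_pow_wordLength hSsym hSgen g)

lemma finite_pow (hS : S.Finite) : ∀ n : ℕ, (S ^ n).Finite := by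
  intro n
  induction n with
  | zero => simp only [pow_zero]; exact Set.finite_one
  | succ k ih => rw [pow_succ]; exact ih.mul hS

lemma ncard_pow_le (hS : S.Finite) : ∀ n : ℕ, (S ^ n).ncard ≤ S.ncard ^ n := by
  intro n
  induction n with
  | zero =>
    simp only [pow_zero]
    rw [show (1 : Set G) = {1} from rfl, Set.ncard_singleton]
  | succ k ih =>
    rw [pow_succ, pow_succ]
    calc (S ^ k * S).ncard ≤ (S ^ k).ncard * S.ncard := Set.natCard_mul_le
      _ ≤ S.ncard ^ k * S.ncard := Nat.mul_le_mul_right _ ih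

lemma ball_finite (hS : S.Finite) (hSsym : S⁻¹ = S) (hSgen : Subgroup.closure S = ⊤) (n : ℕ) :
    {g : G | wordLength S g ≤ n}.Finite :=
  (finite_pow (hS.union (Set.finite_singleton 1)) n).subset (ball_subset_pow hSsym hSgen n)

lemma growthFn_le (hS : S.Finite) (hSsym : S⁻¹ = S) (hSgen : Subgroup.closure S = ⊤) (n : ℕ) :
    growthFn S n ≤ (S.ncard + 1) ^ n := by
  have h1 : growthFn S n ≤ ((S ∪ {1}) ^ n).ncard :=
    Set.ncard_le_ncard (ball_subset_pow hSsym hSgen n)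
      (finite_pow (hS.union (Set.finite_singleton 1)) n)
  refine h1.trans ((ncard_pow_le (hS.union (Set.finite_singleton 1)) n).trans ?_)
  exact Nat.pow_le_pow_left ((Set.ncard_union_le _ _).trans (by simp)) n

lemma wordLength_one_le (n : ℕ) : wordLength S (1 : G) ≤ n :=
  le_trans (Nat.sInf_le (by simp [Set.mem_one])) (Nat.zero_le n)

end GroupAux

lemma exists_clopen_of_cc_subset {Z : Type*} [TopologicalSpace Z] [CompactSpace Z]
    [T2Space Z] {x : Z} {U : Set Z} (hU : IsOpen U) (h : connectedComponent x ⊆ U) :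
    ∃ V : Set Z, IsClopen V ∧ x ∈ V ∧ V ⊆ U := by
  let N := { s : Set Z // IsClopen s ∧ x ∈ s }
  haveI : Nonempty N := ⟨⟨univ, isClopen_univ, mem_univ x⟩⟩
  have hdir : Directed (· ⊇ ·) fun s : N => s.val := by
    rintro ⟨s, hs, hxs⟩ ⟨t, ht, hxt⟩
    exact ⟨⟨s ∩ t, hs.inter ht, ⟨hxs, hxt⟩⟩, inter_subset_left, inter_subset_right⟩
  have h_nhd : ∀ y ∈ ⋂ s : N, s.val, U ∈ 𝓝 y := by
    intro y hy
    have hyc : y ∈ connectedComponent x := by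
      rw [connectedComponent_eq_iInter_isClopen]
      exact hy
    exact hU.mem_nhds (h hyc)
  obtain ⟨s, hs⟩ := exists_subset_nhds_of_compactSpace hdir (fun s => s.property.1.1) h_nhd
  exact ⟨s.val, s.property.1, s.property.2, hs⟩

/-- Boundary bumping: in a connected compact Hausdorff space, the connected component of a
point in a closed proper subset meets the frontier of that subset. -/
lemma bump {Y : Type*} [TopologicalSpace Y] [CompactSpace Y] [T2Space Y] [PreconnectedSpace Y]
    {E : Set Y} (hE : IsClosed E) (hEne : E ≠ univ) {x : Y} (hx : x ∈ E) :
    (connectedComponentIn E x ∩ frontier E).Nonempty := by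
  by_contra hcon
  rw [Set.not_nonempty_iff_eq_empty] at hcon
  haveI : CompactSpace E := isCompact_iff_compactSpace.mp hE.isCompact
  set x' : E := ⟨x, hx⟩ with hx'
  have hccU : connectedComponent x' ⊆ (Subtype.val ⁻¹' (frontier E)ᶜ : Set E) := by
    intro z hz
    simp only [mem_preimage, mem_compl_iff]
    intro hzfr
    have hzin : (z : Y) ∈ connectedComponentIn E x := by
      rw [connectedComponentIn_eq_image hx]
      exact mem_image_of_mem _ hz
    exact absurd hcon (Set.nonempty_iff_ne_empty.mp ⟨z, hzin, hzfr⟩)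
  obtain ⟨V, hVclopen, hxV, hVU⟩ :=
    exists_clopen_of_cc_subset (isOpen_compl_iff.mpr isClosed_frontier |>.preimage
      continuous_subtype_val) hccU
  set W : Set Y := Subtype.val '' V with hW
  have hWE : W ⊆ E := by rintro w ⟨v, _, rfl⟩; exact v.property
  have hWint : W ⊆ interior E := by
    rintro w ⟨v, hv, rfl⟩
    have h1 : (v : Y) ∉ frontier E := hVU hv
    have h2 : (v : Y) ∈ E := v.property
    rw [hE.frontier_eq] at h1
    by_contra hint
    exact h1 ⟨h2, hint⟩
  have hWclosed : IsClosed W :=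
    ((hVclopen.1.isCompact).image continuous_subtype_val).isClosed
  have hWopen : IsOpen W := by
    obtain ⟨W0, hW0, hW0V⟩ := isOpen_induced_iff.mp hVclopen.2
    have himg : W = W0 ∩ E := by
      rw [hW, ← hW0V]
      ext w
      constructor
      · rintro ⟨v, hv, rfl⟩; exact ⟨hv, v.property⟩
      · rintro ⟨hw1, hw2⟩; exact ⟨⟨w, hw2⟩, hw1, rfl⟩
    have : W = W0 ∩ interior E := by
      apply Set.Subset.antisymm
      · intro w hw
        exact ⟨(himg ▸ hw).1, hWint hw⟩
      · intro w hw
        rw [himg]; exact ⟨hw.1, interior_subset hw.2⟩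
    rw [this]
    exact hW0.inter isOpen_interior
  have hWuniv : W = univ :=
    IsClopen.eq_univ ⟨hWclosed, hWopen⟩ ⟨x, mem_image_of_mem _ hxV⟩
  exact hEne (Set.eq_univ_of_univ_subset (hWuniv ▸ hWE))

/-- From a continuum `A`, extract a subcontinuum inside `f ⁻¹' [l,u]` containing a point `p`
with `f p` interior to `[l,u]`, which reaches the boundary values `l` or `u`. -/
lemma exists_piece {X : Type*} [TopologicalSpace X] [T2Space X] {A : Set X}
    (hAc : IsCompact A) (hAconn : IsConnected A) {f : X → ℝ} (hf : Continuous f)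
    {l u : ℝ} (hlu : l ≤ u) {p : X} (hp : p ∈ A) (hfp : f p ∈ Ioo l u)
    {b : X} (hb : b ∈ A) (hfb : f b ∉ Icc l u) :
    ∃ K : Set X, K ⊆ A ∧ (∀ z ∈ K, f z ∈ Icc l u) ∧ IsCompact K ∧ IsConnected K ∧
      p ∈ K ∧ ∃ q ∈ K, f q = l ∨ f q = u := by
  haveI : CompactSpace A := isCompact_iff_compactSpace.mp hAc
  haveI : ConnectedSpace A := Subtype.connectedSpace hAconn
  set g : A → ℝ := fun z => f z with hg
  have hgc : Continuous g := hf.comp continuous_subtype_val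
  set E : Set A := g ⁻¹' (Icc l u) with hE
  have hEc : IsClosed E := isClosed_Icc.preimage hgc
  have hEne : E ≠ univ := by
    intro h
    exact hfb (h ▸ mem_univ (⟨b, hb⟩ : A) : (⟨b, hb⟩ : A) ∈ E)
  have hpE : (⟨p, hp⟩ : A) ∈ E := ⟨hfp.1.le, hfp.2.le⟩
  obtain ⟨q', hq'cc, hq'fr⟩ := bump hEc hEne hpE
  haveI : CompactSpace E := isCompact_iff_compactSpace.mp hEc.isCompact
  have hcc_compact : IsCompact (connectedComponentIn E (⟨p, hp⟩ : A)) := by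
    rw [connectedComponentIn_eq_image hpE]
    exact isClosed_connectedComponent.isCompact.image continuous_subtype_val
  have hcc_conn : IsConnected (connectedComponentIn E (⟨p, hp⟩ : A)) :=
    isConnected_connectedComponentIn_iff.mpr hpE
  have hfr : g q' = l ∨ g q' = u := by
    have h1 : q' ∈ g ⁻¹' (frontier (Icc l u)) := hgc.frontier_preimage_subset _ hq'fr
    rw [frontier_Icc hlu] at h1
    simpa using h1
  refine ⟨Subtype.val '' connectedComponentIn E ⟨p, hp⟩, ?_, ?_, ?_, ?_, ?_, ⟨q'.val, ?_, hfr⟩⟩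
  · exact Subtype.coe_image_subset A _
  · rintro z ⟨v, hv, rfl⟩
    exact connectedComponentIn_subset E _ hv
  · exact hcc_compact.image continuous_subtype_val
  · exact hcc_conn.image _ (continuous_subtype_val.continuousOn)
  · exact ⟨⟨p, hp⟩, mem_connectedComponentIn hpE, rfl⟩
  · exact mem_image_of_mem _ hq'cc

section MetricAux
variable {X : Type*} [MetricSpace X] {D : X → X → ℝ}

lemma contD (hDsymm : ∀ x y, D x y = D y x) (hDtri : ∀ x y z, D x z ≤ D x y + D y z)
    (hDcompat : ∀ s : Set X, IsOpen s ↔ ∀ x ∈ s, ∃ r > (0 : ℝ), {y | D x y < r} ⊆ s)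
    (a : X) : Continuous fun z => D a z := by
  rw [continuous_def]
  intro s hs
  rw [hDcompat]
  intro x hx
  obtain ⟨ε, hε, hball⟩ := Metric.isOpen_iff.mp hs _ hx
  refine ⟨ε, hε, fun y hy => hball ?_⟩
  rw [mem_ball, Real.dist_eq]
  have h1 : D a y ≤ D a x + D x y := hDtri a x y
  have h2 : D a x ≤ D a y + D x y := by have h := hDtri a y x; rwa [hDsymm y x] at h
  have h3 : |D a y - D a x| ≤ D x y := abs_sub_le_iff.mpr ⟨by linarith, by linarith⟩
  exact lt_of_le_of_lt h3 hy

lemma boundD [CompactSpace X] [Nontrivial X] (hDsymm : ∀ x y, D x y = D y x)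
    (hDtri : ∀ x y z, D x z ≤ D x y + D y z)
    (hDcompat : ∀ s : Set X, IsOpen s ↔ ∀ x ∈ s, ∃ r > (0 : ℝ), {y | D x y < r} ⊆ s) :
    ∃ M : ℝ, ∀ x y : X, D x y ≤ M := by
  obtain ⟨x0⟩ := (inferInstance : Nonempty X)
  obtain ⟨z0, _, hz0⟩ := isCompact_univ.exists_isMaxOn (Set.univ_nonempty)
    ((contD hDsymm hDtri hDcompat x0).continuousOn)
  refine ⟨2 * D x0 z0, fun x y => ?_⟩
  have h1 : D x y ≤ D x x0 + D x0 y := hDtri x x0 y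
  have h2 : D x x0 = D x0 x := hDsymm x x0
  have h3 : D x0 x ≤ D x0 z0 := hz0 (mem_univ x)
  have h4 : D x0 y ≤ D x0 z0 := hz0 (mem_univ y)
  linarith

lemma bddD {M : ℝ} (hM : ∀ x y : X, D x y ≤ M) (K : Set X) :
    BddAbove (Set.image2 D K K) := by
  refine ⟨M, fun z hz => ?_⟩
  obtain ⟨x, hx, y, hy, rfl⟩ := hz
  exact hM x y

lemma diamD_ge {M : ℝ} (hM : ∀ x y : X, D x y ≤ M) {K : Set X} {x y : X}
    (hx : x ∈ K) (hy : y ∈ K) : D x y ≤ diamD D K :=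
  le_csSup (bddD hM K) (Set.mem_image2_of_mem hx hy)

end MetricAux

lemma pigeonR {β γ : Type*} [DecidableEq γ] (s : Finset β) (t : Finset γ) (f : β → γ)
    (hf : ∀ a ∈ s, f a ∈ t) (ht : t.Nonempty) :
    ∃ g ∈ t, (s.card : ℝ) ≤ (t.card : ℝ) * ((s.filter fun a => f a = g).card : ℝ) := by
  by_contra hcon
  push_neg at hcon
  have hsum : s.card = ∑ g ∈ t, (s.filter fun a => f a = g).card :=
    Finset.card_eq_sum_card_fiberwise hf
  have htpos : (0 : ℝ) < t.card := by exact_mod_cast Finset.card_pos.mpr ht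
  have hlt : ∀ g ∈ t, ((s.filter fun a => f a = g).card : ℝ) < s.card / t.card := by
    intro g hg
    have := hcon g hg
    rw [lt_div_iff₀ htpos]
    nlinarith
  have hsum' : (s.card : ℝ) = ∑ g ∈ t, ((s.filter fun a => f a = g).card : ℝ) := by
    rw [hsum]; push_cast; ring
  have hstrict : ∑ g ∈ t, ((s.filter fun a => f a = g).card : ℝ)
      < ∑ _g ∈ t, (s.card : ℝ) / t.card := Finset.sum_lt_sum_of_nonempty ht hlt
  rw [Finset.sum_const, nsmul_eq_mul] at hstrict
  have hcancel : (t.card : ℝ) * ((s.card : ℝ) / t.card) = s.card := by field_simp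
  linarith

lemma growth_eventually {G : Type*} [Group G] {S : Set G} (hSfin : S.Finite)
    (hSsym : S⁻¹ = S) (hSgen : Subgroup.closure S = ⊤) (hsub : SubexpGrowth S)
    {α : ℝ} (hα : 1 < α) :
    ∀ᶠ n : ℕ in atTop, (growthFn S n : ℝ) ≤ α ^ ((n : ℝ)/3) := by
  have hα0 : (0:ℝ) < α := lt_trans one_pos hα
  set c : ℝ := (S.ncard : ℝ) + 1 with hc
  have hc1 : (1:ℝ) ≤ c := by have : (0:ℝ) ≤ (S.ncard : ℝ) := Nat.cast_nonneg _; linarith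
  have hbdd : IsBoundedUnder (· ≤ ·) atTop (fun k : ℕ => (growthFn S k : ℝ) ^ (1/(k:ℝ))) := by
    apply isBoundedUnder_of
    refine ⟨c, fun k => ?_⟩
    rcases Nat.eq_zero_or_pos k with hk | hk
    · subst hk
      simp only [Nat.cast_zero, div_zero, Real.rpow_zero]
      exact hc1
    · have hgle : (growthFn S k : ℝ) ≤ c ^ k := by
        have h := growthFn_le hSfin hSsym hSgen k
        calc (growthFn S k : ℝ) ≤ (((S.ncard + 1) ^ k : ℕ) : ℝ) := by exact_mod_cast h
          _ = c ^ k := by push_cast; ring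
      have h2 : (growthFn S k : ℝ) ^ (1/(k:ℝ)) ≤ (c ^ k) ^ (1/(k:ℝ)) :=
        Real.rpow_le_rpow (Nat.cast_nonneg _) hgle (by positivity)
      have h3 : ((c:ℝ) ^ k) ^ (1/(k:ℝ)) = c := by
        have hkne : ((k:ℝ)) ≠ 0 := by exact_mod_cast hk.ne'
        rw [← Real.rpow_natCast c k, ← Real.rpow_mul (by linarith), mul_one_div,
          div_self hkne, Real.rpow_one]
      rw [h3] at h2
      exact h2
  have h13 : (1:ℝ) < α ^ ((1:ℝ)/3) :=
    (Real.one_lt_rpow_iff_of_pos hα0).mpr (Or.inl ⟨hα, by norm_num⟩)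
  have hone : Filter.limsup (fun k : ℕ => (growthFn S k : ℝ) ^ (1/(k:ℝ))) atTop
      < α ^ ((1:ℝ)/3) := lt_of_le_of_lt hsub h13
  have hev := eventually_lt_of_limsup_lt hone hbdd
  filter_upwards [hev, eventually_ge_atTop 1] with k hk hk1
  have hkpos : (0:ℝ) < (k:ℝ) := by exact_mod_cast hk1
  have h5 : ((growthFn S k : ℝ) ^ (1/(k:ℝ))) ^ ((k:ℕ):ℝ)
      ≤ (α ^ ((1:ℝ)/3)) ^ ((k:ℕ):ℝ) :=
    Real.rpow_le_rpow (Real.rpow_nonneg (Nat.cast_nonneg _) _) hk.le hkpos.le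
  have e1 : ((growthFn S k : ℝ) ^ (1/(k:ℝ))) ^ ((k:ℕ):ℝ) = (growthFn S k : ℝ) := by
    rw [← Real.rpow_mul (Nat.cast_nonneg _), one_div, inv_mul_cancel₀ hkpos.ne',
      Real.rpow_one]
  have e2 : (α ^ ((1:ℝ)/3)) ^ ((k:ℕ):ℝ) = α ^ ((k:ℝ)/3) := by
    rw [← Real.rpow_mul hα0.le, one_div, inv_mul_eq_div]
  rwa [e1, e2] at h5

lemma size_eventually {α d : ℝ} (hα : 1 < α) (hd : 0 < d) :
    ∀ᶠ n : ℕ in atTop, Real.sqrt (α ^ n / 3) < (d * α ^ n - 2)/3 := by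
  have hα0 : (0:ℝ) < α := lt_trans one_pos hα
  have hsq1 : 1 < Real.sqrt α := by
    rw [show (1:ℝ) = Real.sqrt 1 from Real.sqrt_one.symm]
    exact Real.sqrt_lt_sqrt (by norm_num) hα
  have htend : Tendsto (fun n : ℕ => (Real.sqrt α) ^ n) atTop atTop :=
    tendsto_pow_atTop_atTop_of_one_lt hsq1
  filter_upwards [htend.eventually_ge_atTop (4/d + 4)] with n hn
  set t := (Real.sqrt α) ^ n with ht
  have ht2 : t^2 = α ^ n := by
    rw [ht, ← pow_mul, mul_comm n 2, pow_mul, Real.sq_sqrt hα0.le]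
  have htpos : 0 < t := pow_pos (lt_trans one_pos hsq1) n
  have hsqle : Real.sqrt (α ^ n / 3) ≤ t := by
    rw [← ht2]
    calc Real.sqrt (t^2/3) ≤ Real.sqrt (t^2) := Real.sqrt_le_sqrt (by nlinarith [sq_nonneg t])
      _ = t := Real.sqrt_sq htpos.le
  have h4d : (0:ℝ) < 4/d := by positivity
  have ht4 : (4:ℝ) ≤ t := by linarith
  have hdm : d * (4/d + 4) = 4 + 4*d := by field_simp
  have hdt : 4 + 4*d ≤ d * t := by
    have h := mul_le_mul_of_nonneg_left hn hd.le
    rw [hdm] at h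
    exact h
  have hkey : t < (d * t^2 - 2)/3 := by
    rw [lt_div_iff₀ (by norm_num : (0:ℝ) < 3)]
    nlinarith [mul_le_mul_of_nonneg_right hdt htpos.le]
  have := lt_of_le_of_lt hsqle hkey
  rwa [ht2] at this

set_option maxHeartbeats 1000000 in
/-- **Claim A.** For every sufficiently large `n` there are a family `𝒦` of more than
`√(αⁿ/3)` pairwise disjoint subcontinua of `A`, each of `D`-diameter `≥ α^{-n}`, and an
element `g` with `|g| ≤ n` such that at least `α^{n/6}/√3` members `K` of `𝒦` satisfy
`diam_D(g(K)) ≥ 1/(4α)`. -/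
theorem claim_A
    {G : Type*} [Group G] (S : Set G) (hSfin : S.Finite) (hSsym : S⁻¹ = S)
    (hSgen : Subgroup.closure S = ⊤) (hsub : SubexpGrowth S)
    {X : Type*} [MetricSpace X] [CompactSpace X] [ConnectedSpace X] [Nontrivial X]
    (φ : G →* (X ≃ₜ X))
    (hexp : ∃ c > (0 : ℝ), ∀ x y : X, x ≠ y → c < ⨆ g : G, dist (φ g x) (φ g y))
    (α : ℝ) (hα : 1 < α) (D : X → X → ℝ)
    (hDnonneg : ∀ x y, 0 ≤ D x y) (hDsymm : ∀ x y, D x y = D y x)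
    (hDeq : ∀ x y, D x y = 0 ↔ x = y) (hDtri : ∀ x y z, D x z ≤ D x y + D y z)
    (hDcompat : ∀ s : Set X, IsOpen s ↔ ∀ x ∈ s, ∃ r > (0 : ℝ), {y | D x y < r} ⊆ s)
    (hDexp : ∀ n : ℕ, 0 < n → ∀ x y : X, x ≠ y → α ^ (-(n : ℤ)) ≤ D x y →
      ∃ g : G, wordLength S g ≤ n ∧ 1 / (4 * α) ≤ D (φ g x) (φ g y))
    (A : Set X) (hAc : IsCompact A) (hAconn : IsConnected A) (hAnt : A.Nontrivial) :
    ∃ N : ℕ, ∀ n : ℕ, N ≤ n → ∃ (𝒦 : Finset (Set X)) (g : G),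
      Real.sqrt (α ^ n / 3) < (𝒦.card : ℝ) ∧
      (∀ K ∈ 𝒦, K ⊆ A ∧ IsCompact K ∧ IsConnected K ∧ α ^ (-(n : ℤ)) ≤ diamD D K) ∧
      ((𝒦 : Set (Set X)).Pairwise Disjoint) ∧
      wordLength S g ≤ n ∧
      α ^ ((n : ℝ) / 6) / Real.sqrt 3 ≤
        (Set.ncard {K ∈ (𝒦 : Set (Set X)) | 1 / (4 * α) ≤ diamD D ((φ g) '' K)} : ℝ) := by
  classical
  have hα0 : (0:ℝ) < α := lt_trans one_pos hα
  obtain ⟨a, ha, b, hb, hab⟩ := hAnt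
  set d : ℝ := D a b with hd
  set f : X → ℝ := fun z => D a z with hf
  have hfc : Continuous f := contD hDsymm hDtri hDcompat a
  have hdpos : 0 < d := lt_of_le_of_ne (hDnonneg a b) (fun h => hab ((hDeq a b).mp h.symm))
  obtain ⟨M, hM⟩ := boundD hDsymm hDtri hDcompat (D := D)
  have hfa : f a = 0 := (hDeq a a).mpr rfl
  have hfb : f b = d := hd.symm
  have hev1 := growth_eventually hSfin hSsym hSgen hsub hα
  have hev2 := size_eventually hα hdpos
  rw [eventually_atTop] at hev1 hev2
  obtain ⟨N1, hN1⟩ := hev1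
  obtain ⟨N2, hN2⟩ := hev2
  refine ⟨max (max N1 N2) 1, fun n hn => ?_⟩
  have hn1 : 1 ≤ n := le_trans (le_max_right _ _) hn
  have hnpos : 0 < n := hn1
  have hgrow := hN1 n (le_trans (le_trans (le_max_left _ _) (le_max_left _ _)) hn)
  have hsize := hN2 n (le_trans (le_trans (le_max_right _ _) (le_max_left _ _)) hn)
  set P : ℝ := α ^ n with hP
  have hPpos : 0 < P := pow_pos hα0 n
  have hδ : α ^ (-(n:ℤ)) = P⁻¹ := by rw [zpow_neg, zpow_natCast]
  have hδpos : (0:ℝ) < P⁻¹ := inv_pos.mpr hPpos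
  set m : ℕ := ⌊(d * P + 1)/3⌋₊ with hm
  have hm_le : (m:ℝ) ≤ (d*P+1)/3 := Nat.floor_le (by positivity)
  have hm_gt : (d*P-2)/3 < (m:ℝ) := by
    have h := Nat.lt_floor_add_one ((d*P+1)/3)
    rw [← hm] at h
    linarith
  -- construct the pieces
  have hex : ∀ k : ℕ, ∃ K : Set X, k < m →
      K ⊆ A ∧ (∀ z ∈ K, f z ∈ Icc ((3*(k:ℝ)+1)*P⁻¹) ((3*(k:ℝ)+3)*P⁻¹)) ∧ IsCompact K ∧
        IsConnected K ∧ ∃ p ∈ K, ∃ q ∈ K, P⁻¹ ≤ D p q := by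
    intro k
    by_cases hk : k < m
    swap
    · exact ⟨∅, fun h => absurd h hk⟩
    have hkm : (k:ℝ) + 1 ≤ (m:ℝ) := by exact_mod_cast hk
    have hk0 : (0:ℝ) ≤ (k:ℝ) := Nat.cast_nonneg k
    have hck' : 3*(k:ℝ)+2 ≤ d*P := by nlinarith [hm_le]
    have hck : (3*(k:ℝ)+2)*P⁻¹ ≤ d := by
      have h1 := mul_le_mul_of_nonneg_right hck' hδpos.le
      have h2 : d*P*P⁻¹ = d := by field_simp
      linarith
    have hcIcc : (3*(k:ℝ)+2)*P⁻¹ ∈ Icc (f a) (f b) := by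
      rw [Set.mem_Icc, hfa, hfb]
      refine ⟨?_, hck⟩
      have h3 : (0:ℝ) ≤ 3*(k:ℝ)+2 := by linarith
      exact mul_nonneg h3 hδpos.le
    obtain ⟨p, hpA, hfp⟩ := hAconn.isPreconnected.intermediate_value ha hb
      hfc.continuousOn hcIcc
    have hlu : (3*(k:ℝ)+1)*P⁻¹ ≤ (3*(k:ℝ)+3)*P⁻¹ := by nlinarith
    have hfpIoo : f p ∈ Ioo ((3*(k:ℝ)+1)*P⁻¹) ((3*(k:ℝ)+3)*P⁻¹) := by
      rw [hfp]
      constructor <;> nlinarith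
    have hfaout : f a ∉ Icc ((3*(k:ℝ)+1)*P⁻¹) ((3*(k:ℝ)+3)*P⁻¹) := by
      rw [hfa]
      intro hcontra
      nlinarith [hcontra.1]
    obtain ⟨K, hKA, hKIcc, hKcomp, hKconn, hpK, q, hqK, hq⟩ :=
      exists_piece hAc hAconn hfc hlu hpA hfpIoo ha hfaout
    refine ⟨K, fun _ => ⟨hKA, hKIcc, hKcomp, hKconn, p, hpK, q, hqK, ?_⟩⟩
    rcases hq with hql | hqu
    · have h2 : f p ≤ f q + D p q := by
        have h := hDtri a q p
        rw [hDsymm q p] at h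
        exact h
      rw [hfp, hql] at h2
      linarith
    · have h1 : f q ≤ f p + D p q := hDtri a p q
      rw [hfp, hqu] at h1
      linarith
  choose K hK using hex
  set 𝒦 : Finset (Set X) := (Finset.range m).image K with h𝒦
  have hKmem : ∀ T ∈ 𝒦, ∃ k, k < m ∧ K k = T := by
    intro T hT
    rw [h𝒦, Finset.mem_image] at hT
    obtain ⟨k, hk, rfl⟩ := hT
    exact ⟨k, Finset.mem_range.mp hk, rfl⟩
  have hdisj2 : ∀ j k, j < k → k < m → Disjoint (K j) (K k) := by
    intro j k hjk hkm
    rw [Set.disjoint_left]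
    intro z hzj hzk
    have hj := (hK j (lt_trans hjk hkm)).2.1 z hzj
    have hkk := (hK k hkm).2.1 z hzk
    have hjk' : (j:ℝ) + 1 ≤ (k:ℝ) := by exact_mod_cast hjk
    have hlt : (3*(j:ℝ)+3) < 3*(k:ℝ)+1 := by linarith
    have hlt2 : (3*(j:ℝ)+3)*P⁻¹ < (3*(k:ℝ)+1)*P⁻¹ := mul_lt_mul_of_pos_right hlt hδpos
    linarith [hj.2, hkk.1]
  have hdisj : ∀ j k, j < m → k < m → j ≠ k → Disjoint (K j) (K k) := by
    intro j k hj hk hne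
    rcases lt_or_gt_of_ne hne with h | h
    · exact hdisj2 j k h hk
    · exact (hdisj2 k j h hj).symm
  have hKne : ∀ k, k < m → (K k).Nonempty := by
    intro k hk
    obtain ⟨p, hp, _⟩ := (hK k hk).2.2.2.2
    exact ⟨p, hp⟩
  have hinj : Set.InjOn K (Finset.range m : Set ℕ) := by
    intro j hj k hk hjk
    by_contra hne
    have hdis := hdisj j k (by simpa using hj) (by simpa using hk) hne
    obtain ⟨p, hp⟩ := hKne j (by simpa using hj)
    exact Set.disjoint_left.mp hdis hp (hjk ▸ hp)
  have hcard : 𝒦.card = m := by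
    rw [h𝒦, Finset.card_image_of_injOn hinj, Finset.card_range]
  have hcard_gt : Real.sqrt (P / 3) < (𝒦.card : ℝ) := by
    rw [hcard]
    exact lt_trans hsize hm_gt
  have hKprop : ∀ T ∈ 𝒦, (T ⊆ A ∧ IsCompact T ∧ IsConnected T ∧ α ^ (-(n:ℤ)) ≤ diamD D T)
      ∧ ∃ p ∈ T, ∃ q ∈ T, p ≠ q ∧ α ^ (-(n:ℤ)) ≤ D p q := by
    intro T hT
    obtain ⟨k, hk, rfl⟩ := hKmem T hT
    obtain ⟨hsubA, hIcc, hcomp, hconn, p, hp, q, hq, hDpq⟩ := hK k hk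
    have hne : p ≠ q := by
      intro h
      rw [h, (hDeq q q).mpr rfl] at hDpq
      linarith
    refine ⟨⟨hsubA, hcomp, hconn, ?_⟩, p, hp, q, hq, hne, ?_⟩
    · rw [hδ]
      exact le_trans hDpq (diamD_ge hM hp hq)
    · rw [hδ]
      exact hDpq
  set gK : Set X → G := fun T =>
    if h : ∃ g : G, wordLength S g ≤ n ∧ 1/(4*α) ≤ diamD D (⇑(φ g) '' T) then h.choose else 1
    with hgK
  have hgKspec : ∀ T ∈ 𝒦, wordLength S (gK T) ≤ n ∧ 1/(4*α) ≤ diamD D (⇑(φ (gK T)) '' T) := by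
    intro T hT
    obtain ⟨_, p, hp, q, hq, hne, hDpq⟩ := hKprop T hT
    have hex2 : ∃ g : G, wordLength S g ≤ n ∧ 1/(4*α) ≤ diamD D (⇑(φ g) '' T) := by
      obtain ⟨g, hg1, hg2⟩ := hDexp n hnpos p q hne hDpq
      exact ⟨g, hg1, le_trans hg2 (diamD_ge hM (mem_image_of_mem _ hp)
        (mem_image_of_mem _ hq))⟩
    rw [hgK]
    simp only
    rw [dif_pos hex2]
    exact hex2.choose_spec
  set Bfin : Finset G := (ball_finite hSfin hSsym hSgen n).toFinset with hBfin
  have hmaps : ∀ T ∈ 𝒦, gK T ∈ Bfin := by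
    intro T hT
    rw [hBfin, Set.Finite.mem_toFinset]
    exact (hgKspec T hT).1
  have hBne : Bfin.Nonempty :=
    ⟨1, by rw [hBfin, Set.Finite.mem_toFinset]; exact wordLength_one_le n⟩
  have hBcard : (Bfin.card : ℝ) ≤ α ^ ((n:ℝ)/3) := by
    have he : growthFn S n = Bfin.card :=
      Set.ncard_eq_toFinset_card _ (ball_finite hSfin hSsym hSgen n)
    rw [← he]
    exact hgrow
  obtain ⟨g0, hg0B, hpig⟩ := pigeonR 𝒦 Bfin gK hmaps hBne
  refine ⟨𝒦, g0, hcard_gt, fun T hT => (hKprop T hT).1, ?_, ?_, ?_⟩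
  · intro T hT T' hT' hne
    obtain ⟨j, hj, rfl⟩ := hKmem T (Finset.mem_coe.mp hT)
    obtain ⟨k, hk, rfl⟩ := hKmem T' (Finset.mem_coe.mp hT')
    exact hdisj j k hj hk (fun h => hne (by rw [h]))
  · rw [hBfin, Set.Finite.mem_toFinset] at hg0B
    exact hg0B
  · set F := 𝒦.filter (fun T => gK T = g0) with hF
    have hFsub : (F : Set (Set X)) ⊆
        {K_1 ∈ (𝒦 : Set (Set X)) | 1/(4*α) ≤ diamD D (⇑(φ g0) '' K_1)} := by
      intro T hT
      rw [Finset.mem_coe, hF, Finset.mem_filter] at hT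
      refine ⟨hT.1, ?_⟩
      have hPr := (hgKspec T hT.1).2
      rwa [hT.2] at hPr
    have hTfin : {K_1 ∈ (𝒦 : Set (Set X)) | 1/(4*α) ≤ diamD D (⇑(φ g0) '' K_1)}.Finite :=
      𝒦.finite_toSet.subset (fun T hT => hT.1)
    have hcardle : (F.card : ℝ) ≤
        (Set.ncard {K_1 ∈ (𝒦 : Set (Set X)) | 1/(4*α) ≤ diamD D (⇑(φ g0) '' K_1)} : ℝ) := by
      have h := Set.ncard_le_ncard hFsub hTfin
      rw [Set.ncard_coe_finset] at h
      exact_mod_cast h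
    have e1 : Real.sqrt (P/3) = α^((n:ℝ)/2) / Real.sqrt 3 := by
      rw [hP, Real.sqrt_div (pow_nonneg hα0.le n) 3]
      congr 1
      rw [← Real.rpow_natCast α n, Real.sqrt_eq_rpow, ← Real.rpow_mul hα0.le, mul_one_div]
    have hFc0 : (0:ℝ) ≤ (F.card : ℝ) := Nat.cast_nonneg _
    have h7 : α^((n:ℝ)/2)/Real.sqrt 3 < α^((n:ℝ)/3) * (F.card : ℝ) := by
      calc α^((n:ℝ)/2)/Real.sqrt 3 = Real.sqrt (P/3) := e1.symm
        _ < (𝒦.card : ℝ) := hcard_gt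
        _ ≤ (Bfin.card : ℝ) * (F.card : ℝ) := hpig
        _ ≤ α^((n:ℝ)/3) * (F.card : ℝ) := mul_le_mul_of_nonneg_right hBcard hFc0
    have h8 : α^((n:ℝ)/6) = α^((n:ℝ)/2) / α^((n:ℝ)/3) := by
      rw [← Real.rpow_sub hα0]
      congr 1
      ring
    have h10 : (0:ℝ) < Real.sqrt 3 := by positivity
    have h11 : α^((n:ℝ)/2) < α^((n:ℝ)/3) * (F.card:ℝ) * Real.sqrt 3 := by
      have h12 := mul_lt_mul_of_pos_right h7 h10
      rwa [div_mul_cancel₀ _ h10.ne'] at h12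
    have hgoal : α^((n:ℝ)/6)/Real.sqrt 3 ≤ (F.card : ℝ) := by
      rw [h8, div_div, div_le_iff₀ (by positivity)]
      nlinarith [h11]
    exact le_trans hgoal hcardle
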